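/- Let (Ω, ℱ, μ) be a probability space, m ⊆ m' ⊆ ℱ sub-σ-algebras, and η, κ ≥ 0. Let λ be a nonnegative, m-measurable, square-integrable random variable; let Z be a square-integrable, m'-measurable random variable that is conditionally Poisson given m with intensity λ; let W be a nonnegative, square-integrable, m'-measurable random variable independent of the σ-algebra generated by m and Z; set λ' := W + η·Z + κ·λ; and let Z' be a square-integrable random variable with E[Z' | m'] = λ' almost surely. Then Cov(Z, Z') = (η + κ)·Var(Z) − κ·E[Z]. -/

import Mathlib

/-!
Condition on `m'`: since `Z` is `m'`-measurable, `Cov(Z, Z') = Cov(Z, λ')`, and by bilinearity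
`Cov(Z, λ') = Cov(Z, W) + η Var Z + κ Cov(Z, λ)`. Independence kills `Cov(Z, W)`. Conditioning on
`m` gives `Cov(Z, λ) = Var λ`, while the conditional Poisson moments give the law of total
variance `Var Z = E λ + Var λ`; hence `Cov(Z, λ) = Var Z - E Z`.
-/

open MeasureTheory ProbabilityTheory

namespace ProbabilityTheory

variable {Ω : Type*} {m mΩ : MeasurableSpace Ω} {μ : Measure[mΩ] Ω}

lemma integral_mul_condExp_of_stronglyMeasurable [IsFiniteMeasure μ] {X Y : Ω → ℝ}
    (hm : m ≤ mΩ) (hX : StronglyMeasurable[m] X) (hXY : Integrable (X * Y) μ)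
    (hY : Integrable Y μ) :
    ∫ ω, X ω * μ[Y|m] ω ∂μ = ∫ ω, X ω * Y ω ∂μ := by
  calc ∫ ω, X ω * μ[Y|m] ω ∂μ = ∫ ω, μ[X * Y|m] ω ∂μ :=
        integral_congr_ae (condExp_mul_of_stronglyMeasurable_left hX hXY hY).symm
    _ = ∫ ω, X ω * Y ω ∂μ := integral_condExp hm

lemma covariance_eq_of_condExp_ae_eq [IsProbabilityMeasure μ] {X Y Y' : Ω → ℝ} (hm : m ≤ mΩ)
    (hX : StronglyMeasurable[m] X) (hX₂ : MemLp X 2 μ) (hY₂ : MemLp Y 2 μ)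
    (hY' : μ[Y|m] =ᵐ[μ] Y') :
    cov[X, Y'; μ] = cov[X, Y; μ] := by
  have hY'₂ : MemLp Y' 2 μ := (hY₂.condExp one_le_two).ae_eq hY'
  have h_mul : μ[X * Y'] = μ[X * Y] := by
    calc μ[X * Y'] = ∫ ω, X ω * μ[Y|m] ω ∂μ :=
          integral_congr_ae (Filter.EventuallyEq.rfl.mul hY'.symm)
      _ = μ[X * Y] :=
          integral_mul_condExp_of_stronglyMeasurable hm hX (hX₂.integrable_mul hY₂)
            (hY₂.integrable one_le_two)
  have h_mean : μ[Y'] = μ[Y] := (integral_congr_ae hY').symm.trans (integral_condExp hm)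
  rw [covariance_eq_sub hX₂ hY'₂, covariance_eq_sub hX₂ hY₂, h_mul, h_mean]

/-- Only the first two conditional moments of a Poisson law are required. -/
structure IsCondPoisson (m : MeasurableSpace Ω) (Z lam : Ω → ℝ) (μ : Measure[mΩ] Ω) : Prop where
  condExp_ae_eq : μ[Z|m] =ᵐ[μ] lam
  condExp_sq_ae_eq : μ[fun ω => Z ω ^ 2|m] =ᵐ[μ] fun ω => lam ω + lam ω ^ 2

namespace IsCondPoisson

variable {Z lam : Ω → ℝ}

lemma integral_eq [IsFiniteMeasure μ] (h : IsCondPoisson m Z lam μ) (hm : m ≤ mΩ) :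
    μ[Z] = μ[lam] :=
  (integral_condExp hm).symm.trans (integral_congr_ae h.condExp_ae_eq)

lemma variance_eq [IsProbabilityMeasure μ] (h : IsCondPoisson m Z lam μ) (hm : m ≤ mΩ)
    (hZ : MemLp Z 2 μ) :
    Var[Z; μ] = μ[lam] + Var[lam; μ] := by
  have hlam : MemLp lam 2 μ := (hZ.condExp one_le_two).ae_eq h.condExp_ae_eq
  have h_sq : μ[Z ^ 2] = μ[lam] + μ[lam ^ 2] := by
    calc μ[Z ^ 2] = ∫ ω, lam ω + lam ω ^ 2 ∂μ :=
          (integral_condExp hm (f := fun ω => Z ω ^ 2)).symm.trans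
            (integral_congr_ae h.condExp_sq_ae_eq)
      _ = μ[lam] + μ[lam ^ 2] := integral_add (hlam.integrable one_le_two) hlam.integrable_sq
  rw [variance_eq_sub hZ, variance_eq_sub hlam, h_sq, h.integral_eq hm]
  ring

lemma covariance_eq [IsProbabilityMeasure μ] (h : IsCondPoisson m Z lam μ) (hm : m ≤ mΩ)
    (hlam : StronglyMeasurable[m] lam) (hZ : MemLp Z 2 μ) :
    cov[Z, lam; μ] = Var[Z; μ] - μ[Z] := by
  have hlam₂ : MemLp lam 2 μ := (hZ.condExp one_le_two).ae_eq h.condExp_ae_eq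
  rw [covariance_comm, ← covariance_eq_of_condExp_ae_eq hm hlam hlam₂ hZ h.condExp_ae_eq,
    covariance_self hlam₂.aemeasurable, h.variance_eq hm hZ, h.integral_eq hm]
  ring

end IsCondPoisson

end ProbabilityTheory

theorem spingarch_lag_one_autocovariance_general
    {Ω : Type*} [F : MeasurableSpace Ω] (μ : Measure Ω) [IsProbabilityMeasure μ]
    (m m' : MeasurableSpace Ω) (hmm' : m ≤ m') (hm' : m' ≤ F)
    (η κ : ℝ)
    (lam Z W Z' : Ω → ℝ)
    (hlam_meas : StronglyMeasurable[m] lam)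
    (hlam_L2 : MemLp lam 2 μ)
    (hZ_L2 : MemLp Z 2 μ)
    (hZ_meas : StronglyMeasurable[m'] Z)
    (hZ_mean : μ[Z | m] =ᵐ[μ] lam)
    (hZ_sq : μ[fun ω => Z ω ^ 2 | m] =ᵐ[μ] fun ω => lam ω + lam ω ^ 2)
    (hW_L2 : MemLp W 2 μ)
    (hW_indep : Indep (MeasurableSpace.comap W Real.measurableSpace)
      (m ⊔ MeasurableSpace.comap Z Real.measurableSpace) μ)
    (lam' : Ω → ℝ) (hlam'_def : lam' = fun ω => W ω + η * Z ω + κ * lam ω)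
    (hZ'_L2 : MemLp Z' 2 μ)
    (hZ'_mean : μ[Z' | m'] =ᵐ[μ] lam') :
    (∫ ω, Z ω * Z' ω ∂μ) - (∫ ω, Z ω ∂μ) * (∫ ω, Z' ω ∂μ)
      = (η + κ) * variance Z μ - κ * (∫ ω, Z ω ∂μ) := by
  have hZW : IndepFun Z W μ :=
    (IndepFun_iff_Indep Z W μ).mpr (indep_of_indep_of_le_right hW_indep le_sup_right).symm
  have hpois : IsCondPoisson m Z lam μ := ⟨hZ_mean, hZ_sq⟩
  subst hlam'_def
  refine (covariance_eq_sub hZ_L2 hZ'_L2).symm.trans ?_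
  rw [← covariance_eq_of_condExp_ae_eq hm' hZ_meas hZ_L2 hZ'_L2 hZ'_mean]
  change cov[Z, W + (fun ω => η * Z ω) + fun ω => κ * lam ω; μ] = _
  rw [covariance_add_right hZ_L2 (hW_L2.add (hZ_L2.const_mul η)) (hlam_L2.const_mul κ),
    covariance_add_right hZ_L2 hW_L2 (hZ_L2.const_mul η), covariance_const_mul_right,
    covariance_const_mul_right, hZW.covariance_eq_zero hZ_L2 hW_L2,
    covariance_self hZ_L2.aemeasurable, hpois.covariance_eq (hmm'.trans hm') hlam_meas hZ_L2]
  ring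

/-- Lag-one autocovariance of the SPINGARCH(1,1) process: if `Z` is conditionally
Poisson given `m` with intensity `λ`, `W` is independent of `σ(m, Z)`, and
`E[Z' | m'] = λ' = W + η·Z + κ·λ`, then `Cov(Z, Z') = (η+κ)·Var(Z) − κ·E[Z]`. -/
theorem spingarch_lag_one_autocovariance
    {Ω : Type*} [F : MeasurableSpace Ω] (μ : Measure Ω) [IsProbabilityMeasure μ]
    (m m' : MeasurableSpace Ω) (hmm' : m ≤ m') (hm' : m' ≤ F)
    (η κ : ℝ) (hη : 0 ≤ η) (hκ : 0 ≤ κ)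
    (lam Z W Z' : Ω → ℝ)
    (hlam_nonneg : ∀ ω, 0 ≤ lam ω)
    (hlam_meas : StronglyMeasurable[m] lam)
    (hlam_L2 : MemLp lam 2 μ)
    (hZ_L2 : MemLp Z 2 μ)
    (hZ_meas : StronglyMeasurable[m'] Z)
    (hZ_mean : μ[Z | m] =ᵐ[μ] lam)
    (hZ_sq : μ[fun ω => Z ω ^ 2 | m] =ᵐ[μ] fun ω => lam ω + lam ω ^ 2)
    (hW_nonneg : ∀ ω, 0 ≤ W ω)
    (hW_L2 : MemLp W 2 μ)
    (hW_meas : StronglyMeasurable[m'] W)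
    (hW_indep : Indep (MeasurableSpace.comap W Real.measurableSpace)
      (m ⊔ MeasurableSpace.comap Z Real.measurableSpace) μ)
    (lam' : Ω → ℝ) (hlam'_def : lam' = fun ω => W ω + η * Z ω + κ * lam ω)
    (hZ'_L2 : MemLp Z' 2 μ)
    (hZ'_mean : μ[Z' | m'] =ᵐ[μ] lam') :
    (∫ ω, Z ω * Z' ω ∂μ) - (∫ ω, Z ω ∂μ) * (∫ ω, Z' ω ∂μ)
      = (η + κ) * variance Z μ - κ * (∫ ω, Z ω ∂μ) :=
  spingarch_lag_one_autocovariance_general (F := F) μ m m' hmm' hm' η κ lam Z W Z' hlam_meas hlam_L2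
    hZ_L2 hZ_meas hZ_mean hZ_sq hW_L2 hW_indep lam' hlam'_def hZ'_L2 hZ'_mean
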